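/- arXiv:math/0612782 — 2 statements merged into one kernel-verified Lean document; each statement's English description precedes it below -/
import Mathlib

section
/- Let n ≥ 1 and d, d₁ be integers with 1 ≤ d₁ < d; set a = n(d − d₁) and m = 2a + n d₁ = n(2d − d₁). For each j ∈ {0,…,a−1} choose a finite set H_j of integers such that a − j ≤ k and k + 1 ≤ a + n d₁ + j for every k ∈ H_j, and consider the multiset consisting, for each j, of the closed connected components of the set [a − j, a + n d₁ + j] ∖ ⋃_{k ∈ H_j} (k, k+1). Then for every integer i ∈ {0,…,m}, the number of intervals of this multiset containing i equals min(i, m − i, a). In particular, if the total number of removed unit intervals Σ_{j=0}^{a−1} |H_j| equals a + n d₁ − 1, then this multiset is a proper system with parameters m = n(2d − d₁) and σ(i) = min(i, m − i, a), consisting of exactly m − 1 intervals. -/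
/-- `IsProperSystem m σ S` : `S` is a *proper system* with parameters `(m, σ)`, i.e. a finite
multiset of closed intervals `[a,b]` with integer endpoints (encoded as pairs `(a,b)` of
integers, one-point intervals `a = b` allowed) contained in `[0,m]`, such that for every
integer `i ∈ [0,m]` the number of intervals of `S` containing `i`, counted with multiplicity,
equals `σ i`. -/
def IsProperSystem (m : ℤ) (σ : ℤ → ℕ) (S : Multiset (ℤ × ℤ)) : Prop :=
  (∀ I ∈ S, 0 ≤ I.1 ∧ I.1 ≤ I.2 ∧ I.2 ≤ m) ∧
  ∀ i : ℤ, 0 ≤ i → i ≤ m →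
    (S.filter fun I => I.1 ≤ i ∧ i ≤ I.2).card = σ i

/-- The *graph* of a system of intervals in `[0,m]` enumerated (with multiplicity) by
`f : Fin t → ℤ × ℤ` : its vertices are the `t` intervals (`Sum.inl j` is the `j`-th interval)
together with `m` additional vertices `w_0, …, w_{m-1}` (`Sum.inr i` is `w_i`), and `w_i` is
adjacent exactly to the intervals whose right endpoint is `i` and to the intervals whose
left endpoint is `i + 1`. -/
def systemGraph (m : ℕ) {t : ℕ} (f : Fin t → ℤ × ℤ) : SimpleGraph (Fin t ⊕ Fin m) :=
  SimpleGraph.fromRel fun u v =>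
    match u, v with
    | Sum.inl j, Sum.inr i => (f j).2 = (i : ℤ) ∨ (f j).1 = (i : ℤ) + 1
    | _, _ => False

/-- A multiset of intervals in `[0,m]` is *admissible* if its graph is a tree.  (The graph is
independent, up to isomorphism, of the chosen enumeration of the multiset.) -/
def IsAdmissible (m : ℕ) (S : Multiset (ℤ × ℤ)) : Prop :=
  ∃ (t : ℕ) (f : Fin t → ℤ × ℤ), (List.ofFn f : Multiset (ℤ × ℤ)) = S ∧
    (systemGraph m f).IsTree

/-- `IsMarkedSystem m σ t M` : `M` is a *marked admissible proper system* with parameters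
`(m, σ)` consisting of exactly `t` intervals: a finite multiset of pairs `(I, p)` where `p`
is an integer point of the interval `I`, whose multiset of first components is an admissible
proper system with parameters `(m, σ)` consisting of `t` intervals. -/
def IsMarkedSystem (m : ℕ) (σ : ℤ → ℕ) (t : ℕ) (M : Multiset ((ℤ × ℤ) × ℤ)) : Prop :=
  (∀ p ∈ M, p.1.1 ≤ p.2 ∧ p.2 ≤ p.1.2) ∧
  IsProperSystem m σ (M.map Prod.fst) ∧
  IsAdmissible m (M.map Prod.fst) ∧
  M.card = t

open scoped Classical in
/-- The multiset of closed connected components of the set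
`[L, R] ∖ ⋃_{k ∈ H} (k, k+1) ⊆ ℝ`: each component is a closed interval with integer
endpoints, recorded as the pair of its endpoints. -/
noncomputable def rowComponents (L R : ℤ) (H : Finset ℤ) : Multiset (ℤ × ℤ) :=
  ((Finset.Icc L R ×ˢ Finset.Icc L R).filter fun q =>
    Set.Icc (q.1 : ℝ) (q.2 : ℝ) =
      connectedComponentIn
        (Set.Icc (L : ℝ) (R : ℝ) \ ⋃ k ∈ H, Set.Ioo (k : ℝ) ((k : ℝ) + 1))
        (q.1 : ℝ)).val

namespace S10

def SS (L R : ℤ) (H : Finset ℤ) : Set ℝ :=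
  Set.Icc (L : ℝ) (R : ℝ) \ ⋃ k ∈ H, Set.Ioo (k : ℝ) ((k : ℝ) + 1)

lemma int_mem_SS {L R : ℤ} (H : Finset ℤ) {i : ℤ} (hLi : L ≤ i) (hiR : i ≤ R) :
    (i : ℝ) ∈ SS L R H := by
  refine ⟨⟨by exact_mod_cast hLi, by exact_mod_cast hiR⟩, ?_⟩
  intro hmem
  rw [Set.mem_iUnion₂] at hmem
  obtain ⟨k, hk, h1, h2⟩ := hmem
  have h1' : (k : ℤ) < i := by exact_mod_cast h1
  have h2' : (i : ℤ) < k + 1 := by exact_mod_cast h2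
  omega

lemma icc_subset_SS {L R : ℤ} {H : Finset ℤ} {p q : ℤ} (hLp : L ≤ p) (hqR : q ≤ R)
    (hgap : ∀ k ∈ H, k + 1 ≤ p ∨ q ≤ k) :
    Set.Icc (p : ℝ) (q : ℝ) ⊆ SS L R H := by
  rintro x ⟨hx1, hx2⟩
  have hLp' : (L : ℝ) ≤ p := by exact_mod_cast hLp
  have hqR' : (q : ℝ) ≤ R := by exact_mod_cast hqR
  refine ⟨⟨le_trans hLp' hx1, le_trans hx2 hqR'⟩, ?_⟩
  intro hmem
  rw [Set.mem_iUnion₂] at hmem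
  obtain ⟨k, hk, h1, h2⟩ := hmem
  rcases hgap k hk with h | h
  · have : ((k : ℝ) + 1) ≤ p := by exact_mod_cast h
    linarith
  · have : (q : ℝ) ≤ k := by exact_mod_cast h
    linarith

lemma comp_eq {L R : ℤ} {H : Finset ℤ} {p q : ℤ} (hLp : L ≤ p) (hpq : p ≤ q) (hqR : q ≤ R)
    (hgap : ∀ k ∈ H, k + 1 ≤ p ∨ q ≤ k)
    (hp : p = L ∨ p - 1 ∈ H) (hq : q = R ∨ q ∈ H) :
    Set.Icc (p : ℝ) (q : ℝ) = connectedComponentIn (SS L R H) (p : ℝ) := by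
  have hsub := icc_subset_SS hLp hqR hgap
  have hpq' : (p : ℝ) ≤ q := by exact_mod_cast hpq
  have hpIcc : (p : ℝ) ∈ Set.Icc (p : ℝ) (q : ℝ) := ⟨le_refl _, hpq'⟩
  apply Set.Subset.antisymm
  · exact isPreconnected_Icc.subset_connectedComponentIn hpIcc hsub
  · intro x hx
    have hxS : x ∈ SS L R H := connectedComponentIn_subset _ _ hx
    have hpC : (p : ℝ) ∈ connectedComponentIn (SS L R H) (p : ℝ) :=
      mem_connectedComponentIn (hsub hpIcc)
    have hord : (connectedComponentIn (SS L R H) (p : ℝ)).OrdConnected :=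
      isPreconnected_connectedComponentIn.ordConnected
    have gapmem : ∀ k ∈ H, ∀ y : ℝ, (k : ℝ) < y → y < (k : ℝ) + 1 → y ∉ SS L R H := by
      intro k hk y h1 h2 hy
      exact hy.2 (Set.mem_iUnion.2 ⟨k, Set.mem_iUnion.2 ⟨hk, h1, h2⟩⟩)
    constructor
    · by_contra hlt
      push_neg at hlt
      rcases hp with rfl | hpH
      · have : (p : ℝ) ≤ x := hxS.1.1
        linarith
      · have hcast : ((p - 1 : ℤ) : ℝ) = (p : ℝ) - 1 := by push_cast; ring
        rcases lt_or_ge ((p : ℝ) - 1) x with h | h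
        · exact absurd hxS (gapmem (p - 1) hpH x (by rw [hcast]; exact h) (by rw [hcast]; linarith))
        · have hsubC : Set.Icc x (p : ℝ) ⊆ connectedComponentIn (SS L R H) (p : ℝ) :=
            hord.out hx hpC
          have hy : (p : ℝ) - 1/2 ∈ connectedComponentIn (SS L R H) (p : ℝ) :=
            hsubC ⟨by linarith, by linarith⟩
          exact absurd (connectedComponentIn_subset _ _ hy)
            (gapmem (p - 1) hpH _ (by rw [hcast]; linarith) (by rw [hcast]; linarith))
    · by_contra hlt
      push_neg at hlt
      rcases hq with rfl | hqH
      · have : x ≤ (q : ℝ) := hxS.1.2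
        linarith
      · rcases lt_or_ge x ((q : ℝ) + 1) with h | h
        · exact absurd hxS (gapmem q hqH x hlt h)
        · have hsubC : Set.Icc (p : ℝ) x ⊆ connectedComponentIn (SS L R H) (p : ℝ) :=
            hord.out hpC hx
          have hy : (q : ℝ) + 1/2 ∈ connectedComponentIn (SS L R H) (p : ℝ) :=
            hsubC ⟨by linarith, by linarith⟩
          exact absurd (connectedComponentIn_subset _ _ hy)
            (gapmem q hqH _ (by linarith) (by linarith))

lemma mem_rc {L R : ℤ} {H : Finset ℤ} {p q : ℤ} :
    (p, q) ∈ rowComponents L R H ↔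
      (L ≤ p ∧ p ≤ R) ∧ (L ≤ q ∧ q ≤ R) ∧
        Set.Icc (p : ℝ) (q : ℝ) = connectedComponentIn (SS L R H) (p : ℝ) := by
  classical
  unfold rowComponents SS
  rw [Finset.mem_val, Finset.mem_filter, Finset.mem_product, Finset.mem_Icc, Finset.mem_Icc]
  tauto

lemma rc_le {L R : ℤ} {H : Finset ℤ} {p q : ℤ} (h : (p, q) ∈ rowComponents L R H) :
    L ≤ p ∧ p ≤ q ∧ q ≤ R := by
  obtain ⟨⟨hLp, hpR⟩, ⟨hLq, hqR⟩, hIcc⟩ := mem_rc.1 h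
  refine ⟨hLp, ?_, hqR⟩
  have hpS : (p : ℝ) ∈ SS L R H := int_mem_SS H hLp hpR
  have : (p : ℝ) ∈ Set.Icc (p : ℝ) (q : ℝ) := by
    rw [hIcc]; exact mem_connectedComponentIn hpS
  exact_mod_cast this.2

lemma rc_left {L R : ℤ} {H : Finset ℤ} {p q : ℤ} (h : (p, q) ∈ rowComponents L R H) :
    p = L ∨ p - 1 ∈ H := by
  by_contra hcon
  push_neg at hcon
  obtain ⟨hne, hnH⟩ := hcon
  obtain ⟨⟨hLp, hpR⟩, ⟨hLq, hqR⟩, hIcc⟩ := mem_rc.1 h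
  have hLlt : L + 1 ≤ p := by omega
  have hLlt' : (L : ℝ) + 1 ≤ p := by exact_mod_cast hLlt
  have hpR' : (p : ℝ) ≤ R := by exact_mod_cast hpR
  have key : Set.Icc ((p : ℝ) - 1/2) (p : ℝ) ⊆ SS L R H := by
    rintro y ⟨hy1, hy2⟩
    refine ⟨⟨by linarith, by linarith⟩, ?_⟩
    intro hmem
    rw [Set.mem_iUnion₂] at hmem
    obtain ⟨k, hk, h1, h2⟩ := hmem
    have hk1 : (k : ℤ) < p := by exact_mod_cast lt_of_lt_of_le h1 hy2
    have hk2 : ((p : ℤ) : ℝ) - 1 < (k : ℝ) + 1 := by linarith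
    have hk2' : (p : ℤ) - 1 < k + 1 := by exact_mod_cast (by push_cast; linarith : ((p - 1 : ℤ) : ℝ) < ((k + 1 : ℤ) : ℝ))
    have : k = p - 1 := by omega
    exact hnH (this ▸ hk)
  have hsubC : Set.Icc ((p : ℝ) - 1/2) (p : ℝ) ⊆
      connectedComponentIn (SS L R H) (p : ℝ) :=
    isPreconnected_Icc.subset_connectedComponentIn ⟨by linarith, le_refl _⟩ key
  rw [← hIcc] at hsubC
  have := (hsubC ⟨le_refl _, by linarith⟩).1
  linarith

lemma rc_exists {L R : ℤ} {H : Finset ℤ} (hH : ∀ k ∈ H, L ≤ k ∧ k + 1 ≤ R)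
    {i : ℤ} (hLi : L ≤ i) (hiR : i ≤ R) :
    ∃ p q : ℤ, (p, q) ∈ rowComponents L R H ∧ p ≤ i ∧ i ≤ q ∧
      (∀ k ∈ H, k + 1 ≤ i → k + 1 ≤ p) := by
  classical
  have hT₁ne : (insert L ((H.filter fun k => k + 1 ≤ i).image (· + 1))).Nonempty :=
    ⟨L, Finset.mem_insert_self _ _⟩
  have hT₂ne : (insert R (H.filter fun k => i ≤ k)).Nonempty :=
    ⟨R, Finset.mem_insert_self _ _⟩
  set p := (insert L ((H.filter fun k => k + 1 ≤ i).image (· + 1))).max' hT₁ne with hp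
  set q := (insert R (H.filter fun k => i ≤ k)).min' hT₂ne with hq
  have hp_le : ∀ k ∈ H, k + 1 ≤ i → k + 1 ≤ p := by
    intro k hk hki
    have hmem : k ∈ H.filter (fun k => k + 1 ≤ i) := Finset.mem_filter.2 ⟨hk, hki⟩
    have hmem2 : k + 1 ∈ (H.filter (fun k => k + 1 ≤ i)).image (· + 1) :=
      Finset.mem_image_of_mem _ hmem
    exact Finset.le_max' _ _ (Finset.mem_insert_of_mem hmem2)
  have hLp : L ≤ p := Finset.le_max' _ _ (Finset.mem_insert_self _ _)
  have hpT := Finset.max'_mem _ hT₁ne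
  rw [← hp] at hpT
  have hpi : p ≤ i ∧ (p = L ∨ p - 1 ∈ H) := by
    rcases Finset.mem_insert.1 hpT with h | h
    · exact ⟨h ▸ hLi, Or.inl h⟩
    · obtain ⟨k, hk, hkp⟩ := Finset.mem_image.1 h
      have hf := Finset.mem_filter.1 hk
      refine ⟨by omega, Or.inr ?_⟩
      have hpk : p - 1 = k := by omega
      rw [hpk]
      exact hf.1
  have hq_le : ∀ k ∈ H, i ≤ k → q ≤ k := by
    intro k hk hki
    exact Finset.min'_le _ _ (Finset.mem_insert_of_mem (Finset.mem_filter.2 ⟨hk, hki⟩))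
  have hqR : q ≤ R := Finset.min'_le _ _ (Finset.mem_insert_self _ _)
  have hqT := Finset.min'_mem _ hT₂ne
  rw [← hq] at hqT
  have hiq : i ≤ q ∧ (q = R ∨ q ∈ H) := by
    rcases Finset.mem_insert.1 hqT with h | h
    · exact ⟨h ▸ hiR, Or.inl h⟩
    · have := Finset.mem_filter.1 h
      exact ⟨this.2, Or.inr this.1⟩
  have hgap : ∀ k ∈ H, k + 1 ≤ p ∨ q ≤ k := by
    intro k hk
    by_cases hki : k + 1 ≤ i
    · exact Or.inl (hp_le k hk hki)
    · exact Or.inr (hq_le k hk (by omega))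
  refine ⟨p, q, mem_rc.2 ⟨⟨hLp, le_trans hpi.1 hiR⟩, ⟨le_trans hLi hiq.1, hqR⟩, ?_⟩,
    hpi.1, hiq.1, hp_le⟩
  exact comp_eq hLp (le_trans hpi.1 hiq.1) hqR hgap hpi.2 hiq.2

lemma rc_unique {L R : ℤ} {H : Finset ℤ} {p₁ q₁ p₂ q₂ i : ℤ}
    (h₁ : (p₁, q₁) ∈ rowComponents L R H) (h₂ : (p₂, q₂) ∈ rowComponents L R H)
    (hi₁ : p₁ ≤ i ∧ i ≤ q₁) (hi₂ : p₂ ≤ i ∧ i ≤ q₂) : p₁ = p₂ ∧ q₁ = q₂ := by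
  obtain ⟨⟨hLp₁, hp₁R⟩, ⟨hLq₁, hq₁R⟩, hIcc₁⟩ := mem_rc.1 h₁
  obtain ⟨⟨hLp₂, hp₂R⟩, ⟨hLq₂, hq₂R⟩, hIcc₂⟩ := mem_rc.1 h₂
  have hiI₁ : (i : ℝ) ∈ Set.Icc (p₁ : ℝ) (q₁ : ℝ) :=
    ⟨by exact_mod_cast hi₁.1, by exact_mod_cast hi₁.2⟩
  have hiI₂ : (i : ℝ) ∈ Set.Icc (p₂ : ℝ) (q₂ : ℝ) :=
    ⟨by exact_mod_cast hi₂.1, by exact_mod_cast hi₂.2⟩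
  have e₁ : connectedComponentIn (SS L R H) (p₁ : ℝ) =
      connectedComponentIn (SS L R H) (i : ℝ) :=
    connectedComponentIn_eq (hIcc₁ ▸ hiI₁)
  have e₂ : connectedComponentIn (SS L R H) (p₂ : ℝ) =
      connectedComponentIn (SS L R H) (i : ℝ) :=
    connectedComponentIn_eq (hIcc₂ ▸ hiI₂)
  have hEq : Set.Icc (p₁ : ℝ) (q₁ : ℝ) = Set.Icc (p₂ : ℝ) (q₂ : ℝ) := by
    rw [hIcc₁, hIcc₂, e₁, e₂]
  have m₁ : (p₂ : ℝ) ∈ Set.Icc (p₁ : ℝ) (q₁ : ℝ) := by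
    rw [hEq]; exact ⟨le_refl _, by exact_mod_cast le_trans hi₂.1 hi₂.2⟩
  have m₂ : (p₁ : ℝ) ∈ Set.Icc (p₂ : ℝ) (q₂ : ℝ) := by
    rw [← hEq]; exact ⟨le_refl _, by exact_mod_cast le_trans hi₁.1 hi₁.2⟩
  have m₃ : (q₂ : ℝ) ∈ Set.Icc (p₁ : ℝ) (q₁ : ℝ) := by
    rw [hEq]; exact ⟨by exact_mod_cast le_trans hi₂.1 hi₂.2, le_refl _⟩
  have m₄ : (q₁ : ℝ) ∈ Set.Icc (p₂ : ℝ) (q₂ : ℝ) := by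
    rw [← hEq]; exact ⟨by exact_mod_cast le_trans hi₁.1 hi₁.2, le_refl _⟩
  constructor
  · have h1 : (p₁ : ℝ) ≤ p₂ := m₁.1
    have h2 : (p₂ : ℝ) ≤ p₁ := m₂.1
    exact_mod_cast le_antisymm (by exact_mod_cast h1) (by exact_mod_cast h2)
  · have h1 : (q₂ : ℝ) ≤ q₁ := m₃.2
    have h2 : (q₁ : ℝ) ≤ q₂ := m₄.2
    exact_mod_cast le_antisymm (by exact_mod_cast h2) (by exact_mod_cast h1)

lemma rc_nodup (L R : ℤ) (H : Finset ℤ) : (rowComponents L R H).Nodup := by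
  unfold rowComponents
  exact Finset.nodup _

lemma card_filter_eq_one {α : Type*} {s : Multiset α} (hs : s.Nodup) {P : α → Prop}
    [DecidablePred P] {a : α} (ha : a ∈ s.filter P) (huniq : ∀ b ∈ s.filter P, b = a) :
    (s.filter P).card = 1 := by
  have hF : (⟨s.filter P, hs.filter P⟩ : Finset α) = {a} :=
    Finset.eq_singleton_iff_unique_mem.2 ⟨ha, huniq⟩
  have : (⟨s.filter P, hs.filter P⟩ : Finset α).card = 1 := by rw [hF]; rfl
  exact this

lemma rc_count_one {L R : ℤ} {H : Finset ℤ} (hH : ∀ k ∈ H, L ≤ k ∧ k + 1 ≤ R)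
    {i : ℤ} (hLi : L ≤ i) (hiR : i ≤ R) :
    ((rowComponents L R H).filter fun I => I.1 ≤ i ∧ i ≤ I.2).card = 1 := by
  obtain ⟨p, q, hmem, hpi, hiq, -⟩ := rc_exists hH hLi hiR
  refine card_filter_eq_one (rc_nodup L R H) (Multiset.mem_filter.2 ⟨hmem, hpi, hiq⟩) ?_
  rintro ⟨p', q'⟩ hb
  obtain ⟨hb, hb1, hb2⟩ := Multiset.mem_filter.1 hb
  obtain ⟨h1, h2⟩ := rc_unique hb hmem ⟨hb1, hb2⟩ ⟨hpi, hiq⟩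
  simp [h1, h2]

lemma rc_count_zero {L R : ℤ} {H : Finset ℤ} {i : ℤ} (h : i < L ∨ R < i) :
    ((rowComponents L R H).filter fun I => I.1 ≤ i ∧ i ≤ I.2).card = 0 := by
  rw [Multiset.card_eq_zero, Multiset.filter_eq_nil]
  rintro ⟨p, q⟩ hpq ⟨h1, h2⟩
  obtain ⟨⟨hLp, hpR⟩, ⟨hLq, hqR⟩, -⟩ := mem_rc.1 hpq
  omega

lemma rc_card {L R : ℤ} {H : Finset ℤ} (hH : ∀ k ∈ H, L ≤ k ∧ k + 1 ≤ R) (hLR : L ≤ R) :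
    (rowComponents L R H).card = H.card + 1 := by
  classical
  have hcard : (⟨rowComponents L R H, rc_nodup L R H⟩ : Finset (ℤ × ℤ)).card =
      (insert (L - 1) H).card := by
    refine Finset.card_bij (fun I _ => I.1 - 1) ?_ ?_ ?_
    · rintro ⟨p, q⟩ hpq
      rcases rc_left (by exact hpq) with h | h
      · exact Finset.mem_insert.2 (Or.inl (by simp [h]))
      · exact Finset.mem_insert.2 (Or.inr h)
    · rintro ⟨p₁, q₁⟩ h₁ ⟨p₂, q₂⟩ h₂ heq
      simp only at heq
      have hp : p₁ = p₂ := by omega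
      obtain ⟨-, hpq₁, -⟩ := rc_le (show (p₁, q₁) ∈ rowComponents L R H from h₁)
      obtain ⟨-, hpq₂, -⟩ := rc_le (show (p₂, q₂) ∈ rowComponents L R H from h₂)
      obtain ⟨-, hq⟩ := rc_unique (show (p₁, q₁) ∈ rowComponents L R H from h₁)
        (show (p₂, q₂) ∈ rowComponents L R H from h₂) ⟨le_refl _, hpq₁⟩ ⟨hp ▸ le_refl _, hp ▸ hpq₂⟩
      simp [hp, hq]
    · intro b hb
      rcases Finset.mem_insert.1 hb with rfl | hbH
      · obtain ⟨p, q, hmem, hpi, hiq, -⟩ := rc_exists hH (le_refl L) hLR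
        obtain ⟨hLp, -, -⟩ := rc_le hmem
        refine ⟨(p, q), hmem, ?_⟩
        simp only
        omega
      · have h1 : L ≤ b + 1 := by have := (hH b hbH).1; omega
        have h2 : b + 1 ≤ R := (hH b hbH).2
        obtain ⟨p, q, hmem, hpi, hiq, hmax⟩ := rc_exists hH h1 h2
        have := hmax b hbH (le_refl _)
        refine ⟨(p, q), hmem, ?_⟩
        simp only
        omega
  have h2 : (insert (L - 1) H).card = H.card + 1 := by
    rw [Finset.card_insert_of_notMem]
    intro hmem
    have := (hH _ hmem).1
    omega
  rw [← h2, ← hcard]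
  rfl

lemma filter_bind' {α β : Type*} (s : Multiset α) (f : α → Multiset β) (P : β → Prop)
    [DecidablePred P] :
    (s.bind f).filter P = s.bind fun a => (f a).filter P := by
  induction s using Multiset.induction with
  | empty => simp
  | cons a s ih => simp [Multiset.cons_bind, Multiset.filter_add, ih]

end S10

namespace S10

lemma count_lemma (A D : ℤ) (a : ℕ) (hAa : (a : ℤ) = A) (hD : 1 ≤ D) (i : ℤ)
    (h0 : 0 ≤ i) (hm : i ≤ 2 * A + D) :
    (∑ j ∈ Finset.range a, if A - (j : ℤ) ≤ i ∧ i ≤ A + D + j then 1 else 0) =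
      (min (min i (2 * A + D - i)) A).toNat := by
  classical
  rw [← Finset.card_filter]
  have hset : (Finset.range a).filter (fun j : ℕ => A - (j : ℤ) ≤ i ∧ i ≤ A + D + (j : ℤ)) =
      Finset.Ico ((max (A - i) (i - A - D)).toNat) a := by
    ext j
    simp only [Finset.mem_filter, Finset.mem_range, Finset.mem_Ico]
    omega
  rw [hset, Nat.card_Ico]
  omega

end S10

/-- Let `n ≥ 1` and `1 ≤ d₁ < d`; set `a = n(d - d₁)` and
`m = 2a + n d₁ = n(2d - d₁)`.  For each `j ∈ {0, …, a-1}` choose a finite set `H j` of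
integers with `a - j ≤ k` and `k + 1 ≤ a + n d₁ + j` for every `k ∈ H j`, and consider the
multiset consisting, for each `j`, of the closed connected components of
`[a - j, a + n d₁ + j] ∖ ⋃_{k ∈ H j} (k, k+1)`.  Then for every integer `i ∈ {0, …, m}` the
number of intervals of this multiset containing `i` equals `min(i, m - i, a)`.  In
particular, if the total number `Σ_j |H j|` of removed unit intervals equals `a + n d₁ - 1`,
then this multiset is a proper system with parameters `m = n(2d - d₁)` and
`σ(i) = min(i, m - i, a)`, consisting of exactly `m - 1` intervals. -/
theorem statement10 (n d d₁ : ℕ) (hn : 1 ≤ n) (hd₁ : 1 ≤ d₁) (hd : d₁ < d)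
    (H : ℕ → Finset ℤ)
    (hH : ∀ j < n * (d - d₁), ∀ k ∈ H j,
      (n * (d - d₁) : ℤ) - j ≤ k ∧ k + 1 ≤ (n * (d - d₁) : ℤ) + n * d₁ + j) :
    (∀ i : ℤ, 0 ≤ i → i ≤ (n * (2 * d - d₁) : ℤ) →
      (((Finset.range (n * (d - d₁))).val.bind fun j =>
          rowComponents ((n * (d - d₁) : ℤ) - j) ((n * (d - d₁) : ℤ) + n * d₁ + j)
            (H j)).filter fun I => I.1 ≤ i ∧ i ≤ I.2).card =
        (min (min i ((n * (2 * d - d₁) : ℤ) - i)) (n * (d - d₁) : ℤ)).toNat) ∧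
    ((∑ j ∈ Finset.range (n * (d - d₁)), (H j).card) = n * (d - d₁) + n * d₁ - 1 →
      IsProperSystem (n * (2 * d - d₁))
          (fun i : ℤ =>
            (min (min i ((n * (2 * d - d₁) : ℤ) - i)) (n * (d - d₁) : ℤ)).toNat)
          ((Finset.range (n * (d - d₁))).val.bind fun j =>
            rowComponents ((n * (d - d₁) : ℤ) - j) ((n * (d - d₁) : ℤ) + n * d₁ + j)
              (H j)) ∧
        ((Finset.range (n * (d - d₁))).val.bind fun j =>
            rowComponents ((n * (d - d₁) : ℤ) - j) ((n * (d - d₁) : ℤ) + n * d₁ + j)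
              (H j)).card = n * (2 * d - d₁) - 1) := by
  classical
  have hdd : d₁ ≤ d := hd.le
  set a : ℕ := n * (d - d₁) with ha_def
  set mn : ℕ := n * (2 * d - d₁) with hmn_def
  set Dn : ℕ := n * d₁ with hDn_def
  set A : ℤ := (n : ℤ) * ((d : ℤ) - (d₁ : ℤ)) with hA_def
  set D : ℤ := (n : ℤ) * (d₁ : ℤ) with hD_def
  set M : ℤ := (n : ℤ) * (2 * (d : ℤ) - (d₁ : ℤ)) with hM_def
  have hAa : (a : ℤ) = A := by
    rw [ha_def, hA_def, Nat.cast_mul, Nat.cast_sub hdd]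
  have hMAD : M = 2 * A + D := by rw [hM_def, hA_def, hD_def]; ring
  have hMm : (mn : ℤ) = M := by
    rw [hmn_def, hM_def, Nat.cast_mul, Nat.cast_sub (by omega)]
    push_cast
    ring
  have hDD : (Dn : ℤ) = D := by rw [hDn_def, hD_def]; push_cast; ring
  have ha1 : 1 ≤ a := by
    rw [ha_def]
    have : 1 * 1 ≤ n * (d - d₁) := Nat.mul_le_mul hn (by omega)
    omega
  have hD1 : 1 ≤ D := by
    rw [← hDD, hDn_def]
    have : 1 * 1 ≤ n * d₁ := Nat.mul_le_mul hn hd₁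
    exact_mod_cast this
  have hA1 : 1 ≤ A := by rw [← hAa]; exact_mod_cast ha1
  have hHrow : ∀ j : ℕ, j < a → ∀ k ∈ H j, A - (j : ℤ) ≤ k ∧ k + 1 ≤ A + D + j := hH
  clear_value A D M a mn Dn
  clear hA_def hD_def hM_def ha_def hmn_def hDn_def hH
  -- part 1
  have key : ∀ i : ℤ, 0 ≤ i → i ≤ M →
      (((Finset.range a).val.bind fun j : ℕ =>
          rowComponents (A - j) (A + D + j) (H j)).filter
            fun I => I.1 ≤ i ∧ i ≤ I.2).card =
        (min (min i (M - i)) A).toNat := by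
    intro i h0 hi
    rw [S10.filter_bind', Multiset.card_bind]
    have hsum : ((Finset.range a).val.map
        (Multiset.card ∘ fun j : ℕ =>
          (rowComponents (A - j) (A + D + j) (H j)).filter fun I => I.1 ≤ i ∧ i ≤ I.2)).sum =
        ∑ j ∈ Finset.range a,
          ((rowComponents (A - (j : ℤ)) (A + D + j) (H j)).filter
            fun I => I.1 ≤ i ∧ i ≤ I.2).card := rfl
    rw [hsum]
    have hstep : ∀ j ∈ Finset.range a,
        ((rowComponents (A - (j : ℤ)) (A + D + j) (H j)).filter
          fun I => I.1 ≤ i ∧ i ≤ I.2).card =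
        if A - (j : ℤ) ≤ i ∧ i ≤ A + D + j then 1 else 0 := by
      intro j hj
      have hj' : j < a := Finset.mem_range.1 hj
      by_cases hin : A - (j : ℤ) ≤ i ∧ i ≤ A + D + j
      · rw [if_pos hin]
        exact S10.rc_count_one (hHrow j hj') hin.1 hin.2
      · rw [if_neg hin]
        refine S10.rc_count_zero ?_
        rcases not_and_or.1 hin with h | h
        · exact Or.inl (by omega)
        · exact Or.inr (by omega)
    rw [Finset.sum_congr rfl hstep]
    rw [hMAD] at hi ⊢
    exact S10.count_lemma A D a hAa hD1 i h0 hi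
  refine ⟨key, fun hsum => ⟨⟨?_, ?_⟩, ?_⟩⟩
  · -- interval bounds
    rintro ⟨p, q⟩ hmem
    rw [Multiset.mem_bind] at hmem
    obtain ⟨j, hj, hm⟩ := hmem
    have hj' : j < a := Finset.mem_range.1 hj
    obtain ⟨h1, h2, h3⟩ := S10.rc_le hm
    have hja : (j : ℤ) ≤ (a : ℤ) - 1 := by exact_mod_cast Nat.le_sub_one_of_lt hj'
    refine ⟨?_, ?_, ?_⟩ <;> dsimp only <;> omega
  · -- counting
    intro i h0 hi
    exact key i h0 hi
  · -- total cardinality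
    rw [Multiset.card_bind]
    have hsum2 : ((Finset.range a).val.map
        (Multiset.card ∘ fun j : ℕ => rowComponents (A - j) (A + D + j) (H j))).sum =
        ∑ j ∈ Finset.range a, (rowComponents (A - (j : ℤ)) (A + D + j) (H j)).card := rfl
    rw [hsum2]
    have hrowcard : ∀ j ∈ Finset.range a,
        (rowComponents (A - (j : ℤ)) (A + D + j) (H j)).card = (H j).card + 1 := by
      intro j hj
      have hj' : j < a := Finset.mem_range.1 hj
      exact S10.rc_card (hHrow j hj') (by omega)
    rw [Finset.sum_congr rfl hrowcard, Finset.sum_add_distrib, hsum, Finset.sum_const,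
      Finset.card_range, smul_eq_mul, mul_one]
    omega
end

section
/- For an integer N ≥ 1, define the sequence y_1 = N, y_{i+1} = y_i − ⌈y_i/2⌉ (so that y_{i+1} = ⌊y_i/2⌋), and let K = K(N) be the least index with y_{K+1} = 0. Then there exists an absolute constant C > 0 such that for every integer N ≥ 2, the product M(N) = ∏_{i=1}^{K} (y_i − y_{i+1})! satisfies |log M(N) − N log N| ≤ C N; in other words, log ∏_{i=1}^{K} (y_i − y_{i+1})! = N log N + O(N). -/
/-- The halving sequence of the paper, reindexed from `0`: `halve N 0 = y_1 = N` and
`halve N i = y_{i+1}`, where `y_{i+1} = y_i - ⌈y_i / 2⌉` (which equals `⌊y_i / 2⌋`);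
in `ℕ`, `⌈y/2⌉ = (y + 1) / 2`. -/
def halve (N : ℕ) : ℕ → ℕ
  | 0 => N
  | i + 1 => halve N i - (halve N i + 1) / 2

lemma halve_succ (N i : ℕ) : halve N (i + 1) = halve N i / 2 := by
  show halve N i - (halve N i + 1) / 2 = halve N i / 2
  omega

lemma halve_eq (N : ℕ) : ∀ i, halve N i = N / 2 ^ i
  | 0 => by simp [halve]
  | (i + 1) => by
      rw [halve_succ, halve_eq N i, Nat.div_div_eq_div_mul, pow_succ]

lemma halve_add_eq (N k : ℕ) :
    (halve N k - halve N (k + 1)) + halve N (k + 1) = halve N k := by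
  have := halve_succ N k
  omega

lemma prod_dvd_fact (N : ℕ) : ∀ k,
    (∏ i ∈ Finset.range k, Nat.factorial (halve N i - halve N (i + 1))) *
      Nat.factorial (halve N k) ∣ Nat.factorial N
  | 0 => by simp [halve]
  | (k + 1) => by
      have ih := prod_dvd_fact N k
      rw [Finset.prod_range_succ, mul_assoc]
      refine dvd_trans (mul_dvd_mul_left _ ?_) ih
      have h := Nat.factorial_mul_factorial_dvd_factorial_add
        (halve N k - halve N (k + 1)) (halve N (k + 1))
      rwa [halve_add_eq N k] at h

lemma choose_le_two_pow (n k : ℕ) : n.choose k ≤ 2 ^ n := by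
  rcases le_or_gt k n with h | h
  · rw [← Nat.sum_range_choose n]
    exact Finset.single_le_sum (f := fun i => n.choose i) (fun _ _ => Nat.zero_le _)
      (Finset.mem_range.mpr (Nat.lt_succ_of_le h))
  · simp [Nat.choose_eq_zero_of_lt h]

lemma fact_le_prod (N : ℕ) : ∀ k,
    Nat.factorial N ≤
      (∏ i ∈ Finset.range k, Nat.factorial (halve N i - halve N (i + 1))) *
        Nat.factorial (halve N k) * 2 ^ (∑ i ∈ Finset.range k, halve N i)
  | 0 => by simp [halve]
  | (k + 1) => by
      have ih := fact_le_prod N k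
      have key : Nat.factorial (halve N k) ≤
          Nat.factorial (halve N k - halve N (k + 1)) *
            Nat.factorial (halve N (k + 1)) * 2 ^ (halve N k) := by
        have hle : halve N (k + 1) ≤ halve N k := by
          have := halve_succ N k; omega
        have h := Nat.choose_mul_factorial_mul_factorial hle
        calc Nat.factorial (halve N k)
            = (halve N k).choose (halve N (k + 1)) *
                Nat.factorial (halve N (k + 1)) *
                Nat.factorial (halve N k - halve N (k + 1)) := h.symm
          _ ≤ 2 ^ (halve N k) * Nat.factorial (halve N (k + 1)) *
                Nat.factorial (halve N k - halve N (k + 1)) := by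
              exact Nat.mul_le_mul_right _ (Nat.mul_le_mul_right _
                (choose_le_two_pow _ _))
          _ = Nat.factorial (halve N k - halve N (k + 1)) *
                Nat.factorial (halve N (k + 1)) * 2 ^ (halve N k) := by ring
      calc Nat.factorial N
          ≤ (∏ i ∈ Finset.range k, Nat.factorial (halve N i - halve N (i + 1))) *
              Nat.factorial (halve N k) * 2 ^ (∑ i ∈ Finset.range k, halve N i) := ih
        _ ≤ (∏ i ∈ Finset.range k, Nat.factorial (halve N i - halve N (i + 1))) *
              (Nat.factorial (halve N k - halve N (k + 1)) *
                Nat.factorial (halve N (k + 1)) * 2 ^ (halve N k)) *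
              2 ^ (∑ i ∈ Finset.range k, halve N i) := by
            exact Nat.mul_le_mul_right _ (Nat.mul_le_mul_left _ key)
        _ = (∏ i ∈ Finset.range (k + 1), Nat.factorial (halve N i - halve N (i + 1))) *
              Nat.factorial (halve N (k + 1)) *
              2 ^ (∑ i ∈ Finset.range (k + 1), halve N i) := by
            rw [Finset.prod_range_succ, Finset.sum_range_succ, pow_add]
            ring

lemma sum_div_aux (N : ℕ) : ∀ k,
    (∑ i ∈ Finset.range k, N / 2 ^ i) + 2 * (N / 2 ^ k) ≤ 2 * N
  | 0 => by simp
  | (k + 1) => by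
      have ih := sum_div_aux N k
      rw [Finset.sum_range_succ]
      have h1 : N / 2 ^ (k + 1) = N / 2 ^ k / 2 := by
        rw [pow_succ, Nat.div_div_eq_div_mul]
      have h2 : 2 * (N / 2 ^ k / 2) ≤ N / 2 ^ k := by omega
      omega

lemma sum_halve_le (N k : ℕ) : (∑ i ∈ Finset.range k, halve N i) ≤ 2 * N := by
  have h : (∑ i ∈ Finset.range k, halve N i) = ∑ i ∈ Finset.range k, N / 2 ^ i :=
    Finset.sum_congr rfl fun i _ => halve_eq N i
  have := sum_div_aux N k
  omega

lemma succ_pow_le (n : ℕ) : ((n : ℝ) + 1) ^ n ≤ (n : ℝ) ^ n * Real.exp 1 := by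
  rcases Nat.eq_zero_or_pos n with h | h
  · subst h; simp [Real.one_le_exp]
  · have hn : (0 : ℝ) < n := by exact_mod_cast h
    have h1 : ((n : ℝ) + 1) = n * (1 + 1 / n) := by field_simp
    have h2 : (1 + 1 / (n : ℝ)) ^ n ≤ Real.exp 1 := by
      have : (1 + 1 / (n : ℝ)) ≤ Real.exp (1 / n) := by
        have := Real.add_one_le_exp (1 / (n : ℝ))
        linarith
      calc (1 + 1 / (n : ℝ)) ^ n ≤ (Real.exp (1 / n)) ^ n := by
            apply pow_le_pow_left₀ (by positivity) this
        _ = Real.exp 1 := by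
            rw [← Real.exp_nat_mul]
            congr 1
            field_simp
    calc ((n : ℝ) + 1) ^ n = (n : ℝ) ^ n * (1 + 1 / n) ^ n := by
          rw [h1, mul_pow]
      _ ≤ (n : ℝ) ^ n * Real.exp 1 := by
          apply mul_le_mul_of_nonneg_left h2 (by positivity)

lemma pow_le_fact_mul_exp : ∀ n : ℕ, (n : ℝ) ^ n ≤ (n.factorial : ℝ) * Real.exp n
  | 0 => by simp
  | (n + 1) => by
      have ih := pow_le_fact_mul_exp n
      have key := succ_pow_le n
      have hfn : (0 : ℝ) ≤ (n.factorial : ℝ) := by positivity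
      calc ((n + 1 : ℕ) : ℝ) ^ (n + 1)
          = ((n : ℝ) + 1) * ((n : ℝ) + 1) ^ n := by push_cast; ring
        _ ≤ ((n : ℝ) + 1) * ((n : ℝ) ^ n * Real.exp 1) := by
            apply mul_le_mul_of_nonneg_left key (by positivity)
        _ ≤ ((n : ℝ) + 1) * ((n.factorial : ℝ) * Real.exp n * Real.exp 1) := by
            apply mul_le_mul_of_nonneg_left _ (by positivity)
            apply mul_le_mul_of_nonneg_right ih (Real.exp_pos 1).le
        _ = (((n + 1) * n.factorial : ℕ) : ℝ) * Real.exp (n + 1) := by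
            rw [Real.exp_add]; push_cast; ring
        _ = (((n + 1 : ℕ).factorial : ℝ)) * Real.exp ((n + 1 : ℕ) : ℝ) := by
            rw [Nat.factorial_succ]; push_cast; ring

/-- For `N ≥ 1` let `y_1 = N`, `y_{i+1} = y_i - ⌈y_i/2⌉ = ⌊y_i/2⌋`, and
let `K` be the least index with `y_{K+1} = 0` (with the reindexing `y_{i+1} = halve N i`,
`K` is the least `k` with `halve N k = 0`).  Then there is an absolute constant `C > 0` such
that for every `N ≥ 2` the product `M(N) = ∏_{i=1}^{K} (y_i - y_{i+1})!` satisfies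
`|log M(N) - N log N| ≤ C N`. -/
theorem statement11 :
    ∃ C : ℝ, 0 < C ∧ ∀ N : ℕ, 2 ≤ N → ∀ K : ℕ,
      IsLeast {k : ℕ | halve N k = 0} K →
      |Real.log (∏ i ∈ Finset.range K, Nat.factorial (halve N i - halve N (i + 1))) -
          (N : ℝ) * Real.log N| ≤ C * N := by
  refine ⟨3, by norm_num, fun N hN K hK => ?_⟩
  have hK0 : halve N K = 0 := hK.1
  set M := ∏ i ∈ Finset.range K, Nat.factorial (halve N i - halve N (i + 1)) with hM
  have hMpos : 0 < M := Finset.prod_pos fun i _ => Nat.factorial_pos _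
  have hNpos : (0 : ℝ) < N := by positivity
  -- M divides N!
  have hdvd : M ∣ Nat.factorial N := by
    have := prod_dvd_fact N K
    rwa [hK0, Nat.factorial_zero, mul_one] at this
  have hMleFact : M ≤ Nat.factorial N := Nat.le_of_dvd (Nat.factorial_pos N) hdvd
  -- N! ≤ M * 2^(2N)
  have hFactLe : Nat.factorial N ≤ M * 2 ^ (2 * N) := by
    have h1 := fact_le_prod N K
    rw [hK0, Nat.factorial_zero, mul_one] at h1
    calc Nat.factorial N ≤ M * 2 ^ (∑ i ∈ Finset.range K, halve N i) := h1
      _ ≤ M * 2 ^ (2 * N) := by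
          exact Nat.mul_le_mul_left _ (Nat.pow_le_pow_right (by norm_num)
            (sum_halve_le N K))
  -- upper bound: log M ≤ N log N
  have h1 : Real.log M ≤ (N : ℝ) * Real.log N := by
    calc Real.log M ≤ Real.log (Nat.factorial N) := by
          apply Real.log_le_log (by exact_mod_cast hMpos)
          exact_mod_cast hMleFact
      _ ≤ Real.log ((N : ℝ) ^ N) := by
          apply Real.log_le_log (by positivity)
          exact_mod_cast Nat.factorial_le_pow N
      _ = (N : ℝ) * Real.log N := by rw [Real.log_pow]
  -- lower bound
  have h2 : (N : ℝ) * Real.log N ≤ Real.log M + 3 * N := by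
    have hs : (N : ℝ) ^ N ≤ (M : ℝ) * 2 ^ (2 * N) * Real.exp N := by
      calc (N : ℝ) ^ N ≤ (Nat.factorial N : ℝ) * Real.exp N := pow_le_fact_mul_exp N
        _ ≤ (M : ℝ) * 2 ^ (2 * N) * Real.exp N := by
            apply mul_le_mul_of_nonneg_right _ (Real.exp_pos _).le
            exact_mod_cast hFactLe
    have hlog := Real.log_le_log (by positivity) hs
    rw [Real.log_pow] at hlog
    rw [Real.log_mul (by positivity) (Real.exp_pos _).ne',
        Real.log_mul (by exact_mod_cast hMpos.ne') (by positivity),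
        Real.log_exp, Real.log_pow] at hlog
    have hlog2 : Real.log 2 ≤ 1 := by
      have := Real.log_two_lt_d9
      linarith
    have : (2 * N : ℕ) * Real.log 2 ≤ 2 * N := by
      have hn : (0 : ℝ) ≤ ((2 * N : ℕ) : ℝ) := by positivity
      calc ((2 * N : ℕ) : ℝ) * Real.log 2 ≤ ((2 * N : ℕ) : ℝ) * 1 :=
            mul_le_mul_of_nonneg_left hlog2 hn
        _ = 2 * N := by push_cast; ring
    calc (N : ℝ) * Real.log N ≤ Real.log M + (2 * N : ℕ) * Real.log 2 + N := hlog
      _ ≤ Real.log M + 2 * N + N := by linarith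
      _ = Real.log M + 3 * N := by ring
  have hprod : (∏ i ∈ Finset.range K,
      ((Nat.factorial (halve N i - halve N (i + 1))) : ℝ)) = (M : ℝ) := by
    rw [hM, Nat.cast_prod]
  rw [hprod, abs_le]
  constructor <;> [linarith; linarith]
end
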